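/- arXiv:1706.00627 — 2 statements merged into one kernel-verified Lean document; each statement's English description precedes it below -/
import Mathlib

section
/- Fix n, m ∈ ℕ and let u = (a^{kl}) ∈ M_m(M_n) with a^{kl} = (λ^{kl}_{ij}) ∈ M_n. Then the supremum sup{ ‖(φ^v)_m(u)‖_m : (E, v) a proper couple } is finite; moreover it does not exceed Σ_{k,l} Σ_{i,j} |λ^{kl}_{ij}|, the sum of the moduli of all scalar entries of u under the identification of M_m(M_n) with M_{mn}. -/
open scoped BigOperators
open Matrix

noncomputable section

/-- Block-diagonal sum `u ⊕ w` of two square matrices with entries in `E`. -/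
def MatDSum {E : Type*} [Zero E] {m k : ℕ}
    (u : Matrix (Fin m) (Fin m) E) (w : Matrix (Fin k) (Fin k) E) :
    Matrix (Fin (m + k)) (Fin (m + k)) E :=
  Matrix.reindex finSumFinEquiv finSumFinEquiv (Matrix.fromBlocks u 0 0 w)

/-- Left action `S·u` of a scalar matrix on an `E`-valued matrix. -/
def scalLeft {E : Type*} [AddCommMonoid E] [Module ℂ E] {m : ℕ}
    (S : Matrix (Fin m) (Fin m) ℂ) (u : Matrix (Fin m) (Fin m) E) :
    Matrix (Fin m) (Fin m) E :=
  Matrix.of fun i j => ∑ k, S i k • u k j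

/-- Right action `u·S` of a scalar matrix on an `E`-valued matrix. -/
def scalRight {E : Type*} [AddCommMonoid E] [Module ℂ E] {m : ℕ}
    (u : Matrix (Fin m) (Fin m) E) (S : Matrix (Fin m) (Fin m) ℂ) :
    Matrix (Fin m) (Fin m) E :=
  Matrix.of fun i j => ∑ k, S k j • u i k

/-- The operator norm `‖S‖_o` of a complex scalar matrix, i.e. its norm as an
operator on the euclidean (Hilbert) space `ℂⁿ`. -/
noncomputable def opNorm {m : ℕ} (S : Matrix (Fin m) (Fin m) ℂ) : ℝ :=
  ‖LinearMap.toContinuousLinearMap (Matrix.toEuclideanLin S)‖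

/-- The `m`-th amplification of a map `φ : E → F`: apply `φ` entrywise. -/
def matAmpl {E F : Type*} (φ : E → F) {m : ℕ} (u : Matrix (Fin m) (Fin m) E) :
    Matrix (Fin m) (Fin m) F :=
  Matrix.of fun i j => φ (u i j)

/-- The operator `φ^v : M_n → E`, `(λ_{ij}) ↦ Σ_{i,j} λ_{ji} • x_{ij}`, associated with
`v = (x_{ij}) ∈ M_n(E)`. -/
def matPhi {E : Type*} [AddCommMonoid E] [Module ℂ E] {n : ℕ}
    (v : Matrix (Fin n) (Fin n) E) (a : Matrix (Fin n) (Fin n) ℂ) : E :=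
  ∑ i, ∑ j, a j i • v i j

/-- `ν` is a matrix-norm on the complex vector space `E`: each `ν m` is a norm on
`M_m(E)`, and Axioms 1 and 2 of Effros/Ruan hold. -/
def IsMatrixNorm {E : Type} [AddCommGroup E] [Module ℂ E]
    (ν : ∀ m : ℕ, Matrix (Fin m) (Fin m) E → ℝ) : Prop :=
  (∀ (m : ℕ) (u v : Matrix (Fin m) (Fin m) E), ν m (u + v) ≤ ν m u + ν m v) ∧
  (∀ (m : ℕ) (c : ℂ) (u : Matrix (Fin m) (Fin m) E), ν m (c • u) = ‖c‖ * ν m u) ∧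
  (∀ (m : ℕ) (u : Matrix (Fin m) (Fin m) E), ν m u = 0 ↔ u = 0) ∧
  (∀ (m k : ℕ) (u : Matrix (Fin m) (Fin m) E),
      ν (m + k) (MatDSum u (0 : Matrix (Fin k) (Fin k) E)) = ν m u) ∧
  (∀ (m : ℕ) (S : Matrix (Fin m) (Fin m) ℂ) (u : Matrix (Fin m) (Fin m) E),
      ν m (scalLeft S u) ≤ opNorm S * ν m u) ∧
  (∀ (m : ℕ) (u : Matrix (Fin m) (Fin m) E) (S : Matrix (Fin m) (Fin m) ℂ),
      ν m (scalRight u S) ≤ ν m u * opNorm S)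

/-- The set of values `‖(φ^v)_m(u)‖_m` over all proper couples `(E, v)`, i.e. over all
matricially normed spaces `E` and all `v` in the closed unit ball of `M_n(E)`. -/
def hatNormSet (n : ℕ) {m : ℕ}
    (u : Matrix (Fin m) (Fin m) (Matrix (Fin n) (Fin n) ℂ)) : Set ℝ :=
  { r | ∃ (E : Type) (_ : AddCommGroup E) (_ : Module ℂ E)
        (ν : ∀ m' : ℕ, Matrix (Fin m') (Fin m') E → ℝ),
        IsMatrixNorm ν ∧
        ∃ v : Matrix (Fin n) (Fin n) E, ν n v ≤ 1 ∧ r = ν m (matAmpl (matPhi v) u) }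

/-- The matrix-norm of the matricially normed space `M̂_n`:
`‖u‖_m = sup { ‖(φ^v)_m(u)‖_m : (E, v) a proper couple }`. -/
noncomputable def hatNorm (n : ℕ) {m : ℕ}
    (u : Matrix (Fin m) (Fin m) (Matrix (Fin n) (Fin n) ℂ)) : ℝ :=
  sSup (hatNormSet n u)

/-! Expanding the amplification gives `(φ^v)_m(u) = Σ λ^{kl}_{ij} e_{kl} ⊗ x_{ji}`, so by the
triangle inequality it suffices that `‖e_{kl} ⊗ x‖_m ≤ ‖v‖_n` for every entry `x` of `v`.
Multiplying on both sides by matrix units, whose operator norm is at most `1`, moves an entry to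
any position and cuts a single entry out of a matrix without increasing the norm; with Axiom 1
this gives `‖e_{kl} ⊗ x_{ji}‖_m = ‖x_{ji}‖_1 = ‖e_{jj} ⊗ x_{ji}‖_n ≤ ‖v‖_n`. -/

lemma opNorm_single_one_le {m : ℕ} (i j : Fin m) : opNorm (Matrix.single i j (1 : ℂ)) ≤ 1 := by
  refine ContinuousLinearMap.opNorm_le_bound _ zero_le_one fun x => ?_
  have hx : Matrix.toEuclideanLin (Matrix.single i j (1 : ℂ)) x = EuclideanSpace.single i (x j) := by
    ext a
    simp [Matrix.single_mulVec, Function.update_apply]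
  rw [LinearMap.coe_toContinuousLinearMap', hx, PiLp.norm_single, one_mul]
  exact PiLp.norm_apply_le x j

lemma scalLeft_single_scalRight_single {E : Type*} [AddCommMonoid E] [Module ℂ E] {m : ℕ}
    (u : Matrix (Fin m) (Fin m) E) (a b c d : Fin m) :
    scalLeft (Matrix.single a b 1) (scalRight u (Matrix.single c d 1)) =
      Matrix.single a d (u b c) := by
  ext x y
  simp only [scalLeft, scalRight, Matrix.of_apply, Matrix.single_apply, ite_smul, one_smul, zero_smul]
  simp [ite_and]

lemma matDSum_single_zero {E : Type*} [Zero E] {m k : ℕ} (i j : Fin m) (x : E) :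
    MatDSum (Matrix.single i j x) (0 : Matrix (Fin k) (Fin k) E) =
      Matrix.single (Fin.castAdd k i) (Fin.castAdd k j) x := by
  ext a b
  induction a using Fin.addCases <;> induction b using Fin.addCases <;>
    simp [MatDSum, Matrix.single, Fin.ext_iff] <;> omega

namespace IsMatrixNorm

variable {E : Type} [AddCommGroup E] [Module ℂ E] {ν : ∀ m : ℕ, Matrix (Fin m) (Fin m) E → ℝ}
  (hν : IsMatrixNorm ν)
include hν

lemma add_le {m : ℕ} (u w : Matrix (Fin m) (Fin m) E) : ν m (u + w) ≤ ν m u + ν m w := hν.1 m u w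

lemma smul_eq {m : ℕ} (c : ℂ) (u : Matrix (Fin m) (Fin m) E) : ν m (c • u) = ‖c‖ * ν m u :=
  hν.2.1 m c u

lemma zero_eq (m : ℕ) : ν m 0 = 0 := (hν.2.2.1 m 0).mpr rfl

lemma matDSum_zero_eq {m : ℕ} (k : ℕ) (u : Matrix (Fin m) (Fin m) E) :
    ν (m + k) (MatDSum u 0) = ν m u :=
  hν.2.2.2.1 m k u

lemma scalLeft_le {m : ℕ} (S : Matrix (Fin m) (Fin m) ℂ) (u : Matrix (Fin m) (Fin m) E) :
    ν m (scalLeft S u) ≤ opNorm S * ν m u :=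
  hν.2.2.2.2.1 m S u

lemma scalRight_le {m : ℕ} (u : Matrix (Fin m) (Fin m) E) (S : Matrix (Fin m) (Fin m) ℂ) :
    ν m (scalRight u S) ≤ ν m u * opNorm S :=
  hν.2.2.2.2.2 m u S

lemma nonneg {m : ℕ} (u : Matrix (Fin m) (Fin m) E) : 0 ≤ ν m u := by
  have h := hν.add_le u (-u)
  rw [add_neg_cancel, hν.zero_eq, ← neg_one_smul ℂ u, hν.smul_eq] at h
  simp only [norm_neg, norm_one, one_mul] at h
  linarith

lemma sum_le {m : ℕ} {ι : Type*} (s : Finset ι) (f : ι → Matrix (Fin m) (Fin m) E) :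
    ν m (∑ x ∈ s, f x) ≤ ∑ x ∈ s, ν m (f x) :=
  Finset.le_sum_of_subadditive (ν m) (hν.zero_eq m).le hν.add_le s f

lemma single_le {m : ℕ} (u : Matrix (Fin m) (Fin m) E) (a b c d : Fin m) :
    ν m (Matrix.single a d (u b c)) ≤ ν m u := by
  rw [← scalLeft_single_scalRight_single]
  calc ν m (scalLeft (Matrix.single a b 1) (scalRight u (Matrix.single c d 1)))
      ≤ opNorm (Matrix.single a b (1 : ℂ)) * ν m (scalRight u (Matrix.single c d 1)) :=
        hν.scalLeft_le _ _
    _ ≤ 1 * (ν m u * opNorm (Matrix.single c d (1 : ℂ))) := by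
        gcongr
        · exact hν.nonneg _
        · exact opNorm_single_one_le a b
        · exact hν.scalRight_le u _
    _ ≤ 1 * (ν m u * 1) := by
        gcongr
        · exact hν.nonneg _
        · exact opNorm_single_one_le c d
    _ = ν m u := by ring

lemma single_eq_single_zero {m : ℕ} (k l : Fin m) (x : E) :
    ν m (Matrix.single k l x) = ν 1 (Matrix.single 0 0 x) := by
  obtain ⟨p, rfl⟩ : ∃ p, m = 1 + p := ⟨m - 1, by have := k.pos; omega⟩
  rw [← hν.matDSum_zero_eq p (Matrix.single 0 0 x), matDSum_single_zero]
  set o : Fin (1 + p) := Fin.castAdd p 0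
  exact le_antisymm
    (by simpa using hν.single_le (Matrix.single o o x) k o o l)
    (by simpa using hν.single_le (Matrix.single k l x) o k l o)

lemma single_apply_le {m n : ℕ} (v : Matrix (Fin n) (Fin n) E) (k l : Fin m) (i j : Fin n) :
    ν m (Matrix.single k l (v i j)) ≤ ν n v := by
  rw [hν.single_eq_single_zero, ← hν.single_eq_single_zero i i]
  exact hν.single_le v i i j i

end IsMatrixNorm

lemma matAmpl_matPhi_eq_sum {E : Type*} [AddCommMonoid E] [Module ℂ E] {n m : ℕ}
    (v : Matrix (Fin n) (Fin n) E) (u : Matrix (Fin m) (Fin m) (Matrix (Fin n) (Fin n) ℂ)) :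
    matAmpl (matPhi v) u = ∑ k, ∑ l, ∑ i, ∑ j, u k l i j • Matrix.single k l (v j i) := by
  ext a b
  simp only [matAmpl, matPhi, of_apply, smul_single, Matrix.sum_apply, single_apply, ite_and,
    Finset.sum_ite_irrel, Finset.sum_const_zero, Finset.sum_ite_eq', Finset.mem_univ, ↓reduceIte]
  exact Finset.sum_comm

lemma le_sum_norm_of_mem_hatNormSet {n m : ℕ}
    (u : Matrix (Fin m) (Fin m) (Matrix (Fin n) (Fin n) ℂ)) {r : ℝ} (hr : r ∈ hatNormSet n u) :
    r ≤ ∑ k, ∑ l, ∑ i, ∑ j, ‖u k l i j‖ := by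
  obtain ⟨E, _, _, ν, hν, v, hv, rfl⟩ := hr
  rw [matAmpl_matPhi_eq_sum]
  calc ν m (∑ k, ∑ l, ∑ i, ∑ j, u k l i j • Matrix.single k l (v j i))
      ≤ ∑ k, ∑ l, ∑ i, ∑ j, ν m (u k l i j • Matrix.single k l (v j i)) := by
        refine (hν.sum_le _ _).trans (Finset.sum_le_sum fun k _ => ?_)
        refine (hν.sum_le _ _).trans (Finset.sum_le_sum fun l _ => ?_)
        refine (hν.sum_le _ _).trans (Finset.sum_le_sum fun i _ => ?_)
        exact hν.sum_le _ _
    _ ≤ ∑ k, ∑ l, ∑ i, ∑ j, ‖u k l i j‖ := by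
        gcongr with k _ l _ i _ j _
        rw [hν.smul_eq]
        exact mul_le_of_le_one_right (norm_nonneg _) ((hν.single_apply_le v k l j i).trans hv)

theorem hatNorm_bddAbove_and_le_sum_abs_general (n m : ℕ)
    (u : Matrix (Fin m) (Fin m) (Matrix (Fin n) (Fin n) ℂ)) :
    BddAbove (hatNormSet n u) ∧
    hatNorm n u ≤ ∑ k, ∑ l, ∑ i, ∑ j, ‖u k l i j‖ :=
  have bound := fun _ hr => le_sum_norm_of_mem_hatNormSet u hr
  ⟨⟨_, bound⟩, Real.sSup_le bound (by positivity)⟩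

/-- **Proposition 1.** For fixed `n, m`, and `u = (a^{kl}) ∈ M_m(M_n)`, the supremum
defining `‖u‖_m` in `M̂_n` is finite (the set of values is bounded above); moreover it
does not exceed the sum `Σ_{k,l} Σ_{i,j} |λ^{kl}_{ij}|` of the moduli of all scalar
entries of `u`. -/
theorem hatNorm_bddAbove_and_le_sum_abs (n m : ℕ) (hn : 0 < n) (hm : 0 < m)
    (u : Matrix (Fin m) (Fin m) (Matrix (Fin n) (Fin n) ℂ)) :
    BddAbove (hatNormSet n u) ∧
    hatNorm n u ≤ ∑ k, ∑ l, ∑ i, ∑ j, ‖u k l i j‖ :=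
  hatNorm_bddAbove_and_le_sum_abs_general n m u
end
end

section
/- Fix n ∈ ℕ. The norm of the matrix 𝕀 in M_n(\widehat{M}_n) equals 1, i.e., sup{ ‖(φ^v)_n(𝕀)‖_n : (E, v) a proper couple } = 1. -/
open scoped BigOperators
open Matrix

noncomputable section

/-- The matrix `𝕀 ∈ M_n(M_n)` whose `(i,j)`-th entry is the elementary matrix `e_{ji}`
(that is, `𝕀 = Σ_{ij} e_{ji} ⊗ e_{ij}`). -/
def bbI (n : ℕ) : Matrix (Fin n) (Fin n) (Matrix (Fin n) (Fin n) ℂ) :=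
  Matrix.of fun i j => Matrix.single j i (1 : ℂ)


/-!
Evaluating `φ^v` entrywise on `𝕀` returns `v` itself, since `φ^v (e_{ji}) = x_{ij}`. Hence every
value `‖(φ^v)_n(𝕀)‖_n` is `‖v‖_n ≤ 1`, and the value `1` is attained by `ℂ` with its operator
norms on `M_m(ℂ) = B(ℂ^m)` and `v` the identity matrix. That these norms satisfy Axiom 1
comes from writing `u ⊕ 0 = J u J*` for the isometry `J : ℂ^m → ℂ^(m+k)`.
-/

open scoped Matrix.Norms.L2Operator

section L2OpNorm

variable {𝕜 : Type*} [RCLike 𝕜]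

lemma l2_opNorm_le_one_of_conjTranspose_mul_self_eq_one {m n : Type*} [Fintype m] [Fintype n]
    [DecidableEq n] {J : Matrix m n 𝕜} (hJ : Jᴴ * J = 1) : ‖J‖ ≤ 1 := by
  have h_one : ‖(1 : Matrix n n 𝕜)‖ ≤ 1 := by
    rw [← diagonal_one, l2_opNorm_diagonal]
    exact (pi_norm_le_iff_of_nonneg zero_le_one).2 fun _ => norm_one.le
  have h_sq := l2_opNorm_conjTranspose_mul_self J
  rw [hJ] at h_sq
  nlinarith [norm_nonneg J]

lemma l2_opNorm_mul_mul_le {l m n o : Type*} [Fintype l] [Fintype m] [Fintype n] [Fintype o]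
    [DecidableEq m] [DecidableEq n] [DecidableEq o]
    (A : Matrix l m 𝕜) (B : Matrix m n 𝕜) (C : Matrix n o 𝕜) : ‖A * B * C‖ ≤ ‖A‖ * ‖B‖ * ‖C‖ :=
  (l2_opNorm_mul _ _).trans (by gcongr; exact l2_opNorm_mul _ _)

lemma l2_opNorm_mul_mul_conjTranspose_of_isometry {m n : Type*} [Fintype m] [Fintype n]
    [DecidableEq m] [DecidableEq n] {J : Matrix m n 𝕜} (hJ : Jᴴ * J = 1) (u : Matrix n n 𝕜) :
    ‖J * u * Jᴴ‖ = ‖u‖ := by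
  have hJ_le : ‖J‖ ≤ 1 := l2_opNorm_le_one_of_conjTranspose_mul_self_eq_one hJ
  have hJH_le : ‖Jᴴ‖ ≤ 1 := (l2_opNorm_conjTranspose J).symm ▸ hJ_le
  have h_compress : Jᴴ * (J * u * Jᴴ) * J = u := by
    simp only [← Matrix.mul_assoc, hJ, Matrix.one_mul]
    rw [Matrix.mul_assoc, hJ, Matrix.mul_one]
  apply le_antisymm
  · calc ‖J * u * Jᴴ‖ ≤ ‖J‖ * ‖u‖ * ‖Jᴴ‖ := l2_opNorm_mul_mul_le _ _ _
      _ ≤ 1 * ‖u‖ * 1 := by gcongr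
      _ = ‖u‖ := by ring
  · calc ‖u‖ = ‖Jᴴ * (J * u * Jᴴ) * J‖ := by rw [h_compress]
      _ ≤ ‖Jᴴ‖ * ‖J * u * Jᴴ‖ * ‖J‖ := l2_opNorm_mul_mul_le _ _ _
      _ ≤ 1 * ‖J * u * Jᴴ‖ * 1 := by gcongr
      _ = ‖J * u * Jᴴ‖ := by ring

def castAddIsometry (𝕜 : Type*) [RCLike 𝕜] (m k : ℕ) : Matrix (Fin (m + k)) (Fin m) 𝕜 :=
  reindex finSumFinEquiv (Equiv.refl _) (fromRows 1 0)

lemma conjTranspose_castAddIsometry_mul_self (m k : ℕ) :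
    (castAddIsometry 𝕜 m k)ᴴ * castAddIsometry 𝕜 m k = 1 := by
  simp [castAddIsometry, submatrix_mul_equiv, conjTranspose_fromRows_eq_fromCols_conjTranspose,
    fromCols_mul_fromRows]

lemma matDSum_zero_eq_castAddIsometry_conj {m k : ℕ} (u : Matrix (Fin m) (Fin m) 𝕜) :
    MatDSum u (0 : Matrix (Fin k) (Fin k) 𝕜)
      = castAddIsometry 𝕜 m k * u * (castAddIsometry 𝕜 m k)ᴴ := by
  ext i j
  refine Fin.addCases (fun a => ?_) (fun c => ?_) i <;>
    refine Fin.addCases (fun b => ?_) (fun d => ?_) j <;>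
    simp [MatDSum, castAddIsometry, Matrix.mul_apply, Matrix.one_apply]

lemma l2_opNorm_matDSum_zero {m k : ℕ} (u : Matrix (Fin m) (Fin m) 𝕜) :
    ‖MatDSum u (0 : Matrix (Fin k) (Fin k) 𝕜)‖ = ‖u‖ := by
  rw [matDSum_zero_eq_castAddIsometry_conj,
    l2_opNorm_mul_mul_conjTranspose_of_isometry (conjTranspose_castAddIsometry_mul_self m k)]

end L2OpNorm

lemma opNorm_eq_l2_opNorm {m : ℕ} (S : Matrix (Fin m) (Fin m) ℂ) : opNorm S = ‖S‖ := rfl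

lemma scalLeft_eq_mul {m : ℕ} (S u : Matrix (Fin m) (Fin m) ℂ) : scalLeft S u = S * u := by
  ext i j
  simp [scalLeft, Matrix.mul_apply]

lemma scalRight_eq_mul {m : ℕ} (u S : Matrix (Fin m) (Fin m) ℂ) : scalRight u S = u * S := by
  ext i j
  simp [scalRight, Matrix.mul_apply, mul_comm]

lemma isMatrixNorm_l2_opNorm : IsMatrixNorm fun m (u : Matrix (Fin m) (Fin m) ℂ) => ‖u‖ :=
  ⟨fun _ => norm_add_le, fun _ => norm_smul, fun _ _ => norm_eq_zero,
    fun _ _ => l2_opNorm_matDSum_zero,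
    fun _ S u => by rw [scalLeft_eq_mul, opNorm_eq_l2_opNorm]; exact l2_opNorm_mul S u,
    fun _ u S => by rw [scalRight_eq_mul, opNorm_eq_l2_opNorm]; exact l2_opNorm_mul u S⟩

lemma matPhi_single {E : Type*} [AddCommMonoid E] [Module ℂ E] {n : ℕ}
    (v : Matrix (Fin n) (Fin n) E) (i j : Fin n) (c : ℂ) :
    matPhi v (single i j c) = c • v j i := by
  simp [matPhi, single_apply, ite_and, ite_smul, Finset.sum_ite_eq]

lemma matAmpl_matPhi_bbI {E : Type*} [AddCommMonoid E] [Module ℂ E] {n : ℕ}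
    (v : Matrix (Fin n) (Fin n) E) : matAmpl (matPhi v) (bbI n) = v := by
  ext i j
  simp [matAmpl, bbI, matPhi_single]

/-- **Proposition 7.** The norm of `𝕀` in `M_n(M̂_n)` equals `1`:
`sup{ ‖(φ^v)_n(𝕀)‖_n : (E,v) a proper couple } = 1`. -/
theorem hatNorm_bbI (n : ℕ) (hn : 0 < n) : hatNorm n (bbI n) = 1 := by
  have : Nonempty (Fin n) := ⟨⟨0, hn⟩⟩
  have h_one : ‖(1 : Matrix (Fin n) (Fin n) ℂ)‖ = 1 := norm_one
  refine IsGreatest.csSup_eq ⟨?_, ?_⟩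
  · exact ⟨ℂ, inferInstance, inferInstance, _, isMatrixNorm_l2_opNorm, 1, h_one.le,
      by rw [matAmpl_matPhi_bbI, h_one]⟩
  · rintro r ⟨E, _, _, ν, -, v, hv, rfl⟩
    rwa [matAmpl_matPhi_bbI]
end
end
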